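/- arXiv:2108.10542 — 3 statements merged into one kernel-verified Lean document; each statement's English description precedes it below -/
import Mathlib

section
/- Let N ≥ 1 and p be real numbers with 2p > N + 1, and let r > 0. Let φ : (0,r] → [0,∞) and A : (0,r] → (0,∞) be continuously differentiable, and let m̄, ρ : (0,r] → ℝ be continuous with ρ ≥ 0. Assume that on (0,r]: (i) φ' + φ·(φ + 2m̄)/N ≤ ρ, and (ii) A'/A ≤ φ + m̄. Then on (0,r], (φ^{2p−1}·A)' + ((2p−1−N)/N)·φ^{2p}·A + ((4p−2−N)/N)·m̄·φ^{2p−1}·A ≤ (2p−1)·ρ·φ^{2p−2}·A. -/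
/-!
Differentiating, `(φ^{2p-1} A)' = (2p-1) φ' φ^{2p-2} A + φ^{2p-1} A'`. Bounding `φ'` by the
Riccati inequality (i) and `A'` by the mean curvature bound (ii), with the nonnegative
multipliers `(2p-1) φ^{2p-2} A` and `φ^{2p-1}`, the `φ^{2p} A` and `m̄ φ^{2p-1} A` terms cancel
exactly against the two correction terms, leaving `(2p-1) ρ φ^{2p-2} A`.
-/

theorem rpow_mul_deriv_add_le_of_riccati {N p a a' A A' m ρ : ℝ} (hN : N ≠ 0)
    (hp : 1 < 2 * p) (ha : 0 ≤ a) (hA : 0 < A)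
    (hRic : a' + a * (a + 2 * m) / N ≤ ρ) (hmean : A' / A ≤ a + m) :
    a' * (2 * p - 1) * a ^ (2 * p - 2) * A + a ^ (2 * p - 1) * A'
      + (2 * p - 1 - N) / N * (a ^ (2 * p) * A)
      + (4 * p - 2 - N) / N * (m * a ^ (2 * p - 1) * A)
      ≤ (2 * p - 1) * (ρ * a ^ (2 * p - 2) * A) := by
  set E := a ^ (2 * p - 2)
  have hpow₁ : a ^ (2 * p - 1) = E * a := by
    rw [show 2 * p - 1 = 2 * p - 2 + 1 by ring, Real.rpow_add' ha (by linarith), Real.rpow_one]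
  have hpow₂ : a ^ (2 * p) = E * a ^ 2 := by
    rw [show 2 * p = 2 * p - 2 + 2 by ring, Real.rpow_add' ha (by linarith), Real.rpow_two]
  have hA' : A' ≤ (a + m) * A := (div_le_iff₀ hA).mp hmean
  rw [hpow₁, hpow₂]
  have hNN : N / N = 1 := div_self hN
  linear_combination ((2 * p - 1) * E * A) * hRic + (E * a) * hA'
    - (E * A * (a ^ 2 + m * a)) * hNN

theorem stmt_3_general (N p r : ℝ) (hN : 1 ≤ N) (hp : N + 1 < 2 * p)
    (φ φ' A A' mbar ρ : ℝ → ℝ)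
    (hφ : ∀ t ∈ Set.Ioc 0 r, HasDerivAt φ (φ' t) t)
    (hφnn : ∀ t ∈ Set.Ioc 0 r, 0 ≤ φ t)
    (hA : ∀ t ∈ Set.Ioc 0 r, HasDerivAt A (A' t) t)
    (hApos : ∀ t ∈ Set.Ioc 0 r, 0 < A t)
    (hRic : ∀ t ∈ Set.Ioc 0 r, φ' t + φ t * (φ t + 2 * mbar t) / N ≤ ρ t)
    (hmean : ∀ t ∈ Set.Ioc 0 r, A' t / A t ≤ φ t + mbar t) :
    ∀ t ∈ Set.Ioc 0 r, ∀ D : ℝ,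
      HasDerivAt (fun u => φ u ^ (2 * p - 1) * A u) D t →
      D + (2 * p - 1 - N) / N * (φ t ^ (2 * p) * A t)
        + (4 * p - 2 - N) / N * (mbar t * φ t ^ (2 * p - 1) * A t)
        ≤ (2 * p - 1) * (ρ t * φ t ^ (2 * p - 2) * A t) := by
  intro t ht D hD
  have hderiv := ((hφ t ht).rpow_const (p := 2 * p - 1) (Or.inr (by linarith))).mul (hA t ht)
  rw [hD.unique hderiv, sub_sub, one_add_one_eq_two]
  exact rpow_mul_deriv_add_le_of_riccati (by positivity) (by linarith) (hφnn t ht) (hApos t ht)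
    (hRic t ht) (hmean t ht)

/-- The differential inequality (2.1): if `φ' + φ(φ + 2·mbar)/N ≤ ρ` and
`A'/A ≤ φ + mbar` on `(0,r]`, then
`(φ^{2p−1}A)' + ((2p−1−N)/N)φ^{2p}A + ((4p−2−N)/N)·mbar·φ^{2p−1}A ≤ (2p−1)ρφ^{2p−2}A`. -/
theorem stmt_3 (N p r : ℝ) (hN : 1 ≤ N) (hp : N + 1 < 2 * p) (hr : 0 < r)
    (φ φ' A A' mbar ρ : ℝ → ℝ)
    (hφ : ∀ t ∈ Set.Ioc 0 r, HasDerivAt φ (φ' t) t)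
    (hφ'c : ContinuousOn φ' (Set.Ioc 0 r))
    (hφnn : ∀ t ∈ Set.Ioc 0 r, 0 ≤ φ t)
    (hA : ∀ t ∈ Set.Ioc 0 r, HasDerivAt A (A' t) t)
    (hA'c : ContinuousOn A' (Set.Ioc 0 r))
    (hApos : ∀ t ∈ Set.Ioc 0 r, 0 < A t)
    (hmbarc : ContinuousOn mbar (Set.Ioc 0 r))
    (hρc : ContinuousOn ρ (Set.Ioc 0 r))
    (hρnn : ∀ t ∈ Set.Ioc 0 r, 0 ≤ ρ t)
    (hRic : ∀ t ∈ Set.Ioc 0 r, φ' t + φ t * (φ t + 2 * mbar t) / N ≤ ρ t)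
    (hmean : ∀ t ∈ Set.Ioc 0 r, A' t / A t ≤ φ t + mbar t) :
    ∀ t ∈ Set.Ioc 0 r, ∀ D : ℝ,
      HasDerivAt (fun u => φ u ^ (2 * p - 1) * A u) D t →
      D + (2 * p - 1 - N) / N * (φ t ^ (2 * p) * A t)
        + (4 * p - 2 - N) / N * (mbar t * φ t ^ (2 * p - 1) * A t)
        ≤ (2 * p - 1) * (ρ t * φ t ^ (2 * p - 2) * A t) :=
  stmt_3_general N p r hN hp φ φ' A A' mbar ρ hφ hφnn hA hApos hRic hmean
end

section
/- Let q > 1 be a real number and 0 < r ≤ R. Let u, v : (0,R] → (0,∞) be continuously differentiable, φ : (0,R] → [0,∞) continuous, and G : (0,R] → [0,∞) nondecreasing. Assume for all t ∈ (0,R]: (u/v)'(t) ≤ (u(t)/v(t))·φ(t) and φ(t)^q·u(t) ≤ G(t). Then (u(R)/v(R))^{1/q} − (u(r)/v(r))^{1/q} ≤ (G(R)^{1/q}/q)·∫_r^R v(t)^{−1/q} dt. -/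
/-!
With `w = u / v`, the function `w ^ (1/q)` has derivative `(1/q) w' w ^ (1/q - 1)`, which the
hypothesis `w' ≤ w φ` bounds by `φ w ^ (1/q) / q = φ u ^ (1/q) v ^ (-1/q) / q`. Taking `q`-th roots
in `φ ^ q u ≤ G ≤ G R` bounds `φ u ^ (1/q)` by `G R ^ (1/q)`, and integrating the resulting
derivative bound from `r` to `R` gives the claim.
-/

open Set

namespace Real

theorem mul_rpow_one_div_le_of_rpow_mul_le {a b c q : ℝ} (ha : 0 ≤ a) (hb : 0 ≤ b) (hq : 0 < q)
    (h : a ^ q * b ≤ c) : a * b ^ (1 / q) ≤ c ^ (1 / q) := by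
  have hroot : (a ^ q * b) ^ (1 / q) = a * b ^ (1 / q) := by
    rw [mul_rpow (rpow_nonneg ha q) hb, ← rpow_mul ha, mul_one_div_cancel hq.ne', rpow_one]
  rw [← hroot]
  exact rpow_le_rpow (by positivity) h (by positivity)

theorem mul_one_div_mul_rpow_sub_one_le_of_le_mul {w w' φ q : ℝ} (hw : 0 < w) (hq : 0 < q) (hw' : w' ≤ w * φ) :
    w' * (1 / q) * w ^ (1 / q - 1) ≤ φ * w ^ (1 / q) / q := by
  calc w' * (1 / q) * w ^ (1 / q - 1) ≤ w * φ * (1 / q) * w ^ (1 / q - 1) := by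
        gcongr
    _ = φ * w ^ (1 / q) / q := by
        rw [rpow_sub_one hw.ne']
        field_simp

end Real

theorem stmt_11_general (q r R : ℝ) (hq : 1 < q) (hr : 0 < r) (hrR : r ≤ R)
    (u u' v v' φ G : ℝ → ℝ)
    (hu : ∀ t ∈ Set.Ioc 0 R, HasDerivAt u (u' t) t)
    (hupos : ∀ t ∈ Set.Ioc 0 R, 0 < u t)
    (hv : ∀ t ∈ Set.Ioc 0 R, HasDerivAt v (v' t) t)
    (hvpos : ∀ t ∈ Set.Ioc 0 R, 0 < v t)
    (hφnn : ∀ t ∈ Set.Ioc 0 R, 0 ≤ φ t)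
    (hGmono : MonotoneOn G (Set.Ioc 0 R))
    (hquot : ∀ t ∈ Set.Ioc 0 R,
      (u' t * v t - u t * v' t) / (v t) ^ 2 ≤ u t / v t * φ t)
    (hφqu : ∀ t ∈ Set.Ioc 0 R, φ t ^ q * u t ≤ G t) :
    (u R / v R) ^ (1 / q) - (u r / v r) ^ (1 / q)
      ≤ G R ^ (1 / q) / q * ∫ t in r..R, v t ^ (-(1 / q)) := by
  have hq0 : 0 < q := one_pos.trans hq
  have hsub : Icc r R ⊆ Ioc 0 R := fun t ht => ⟨hr.trans_le ht.1, ht.2⟩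
  have hR : R ∈ Ioc 0 R := hsub (right_mem_Icc.2 hrR)
  have hderiv : ∀ t ∈ Ioc 0 R, HasDerivAt (fun s => (u s / v s) ^ (1 / q))
      ((u' t * v t - u t * v' t) / v t ^ 2 * (1 / q) * (u t / v t) ^ (1 / q - 1)) t :=
    fun t ht => ((hu t ht).div (hv t ht) (hvpos t ht).ne').rpow_const
      (Or.inl (div_pos (hupos t ht) (hvpos t ht)).ne')
  have hbound : ∀ t ∈ Ioc 0 R,
      (u' t * v t - u t * v' t) / v t ^ 2 * (1 / q) * (u t / v t) ^ (1 / q - 1)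
        ≤ G R ^ (1 / q) / q * v t ^ (-(1 / q)) := by
    intro t ht
    have hu0 := hupos t ht
    have hv0 := hvpos t ht
    have hroot : φ t * u t ^ (1 / q) ≤ G R ^ (1 / q) :=
      Real.mul_rpow_one_div_le_of_rpow_mul_le (hφnn t ht) hu0.le hq0
        ((hφqu t ht).trans (hGmono ht hR ht.2))
    calc _ ≤ φ t * (u t / v t) ^ (1 / q) / q :=
          Real.mul_one_div_mul_rpow_sub_one_le_of_le_mul (div_pos hu0 hv0) hq0 (hquot t ht)
      _ = φ t * u t ^ (1 / q) * v t ^ (-(1 / q)) / q := by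
          rw [Real.div_rpow hu0.le hv0.le, Real.rpow_neg hv0.le]
          ring
      _ ≤ G R ^ (1 / q) / q * v t ^ (-(1 / q)) := by
          rw [div_mul_eq_mul_div]
          gcongr
  have hvcont : ContinuousOn (fun t => v t ^ (-(1 / q))) (Icc r R) :=
    ContinuousOn.rpow_const (fun t ht => (hv t (hsub ht)).continuousAt.continuousWithinAt)
      fun t ht => Or.inl (hvpos t (hsub ht)).ne'
  rw [← intervalIntegral.integral_const_mul]
  refine intervalIntegral.sub_le_integral_of_hasDeriv_right_of_le hrR
    (fun t ht => (hderiv t (hsub ht)).continuousAt.continuousWithinAt)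
    (fun t ht => (hderiv t (hsub (Ioo_subset_Icc_self ht))).hasDerivWithinAt)
    ((continuousOn_const.mul hvcont).integrableOn_compact isCompact_Icc)
    (fun t ht => hbound t (hsub (Ioo_subset_Icc_self ht)))

/-- Analytic core of Theorem 3.1 (volume element comparison): if
`(u/v)' ≤ (u/v)·φ` and `φ^q·u ≤ G` with `G` nondecreasing, then
`(u(R)/v(R))^{1/q} − (u(r)/v(r))^{1/q} ≤ (G(R)^{1/q}/q)·∫_r^R v^{−1/q}`. -/
theorem stmt_11 (q r R : ℝ) (hq : 1 < q) (hr : 0 < r) (hrR : r ≤ R)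
    (u u' v v' φ G : ℝ → ℝ)
    (hu : ∀ t ∈ Set.Ioc 0 R, HasDerivAt u (u' t) t)
    (hu'c : ContinuousOn u' (Set.Ioc 0 R))
    (hupos : ∀ t ∈ Set.Ioc 0 R, 0 < u t)
    (hv : ∀ t ∈ Set.Ioc 0 R, HasDerivAt v (v' t) t)
    (hv'c : ContinuousOn v' (Set.Ioc 0 R))
    (hvpos : ∀ t ∈ Set.Ioc 0 R, 0 < v t)
    (hφc : ContinuousOn φ (Set.Ioc 0 R))
    (hφnn : ∀ t ∈ Set.Ioc 0 R, 0 ≤ φ t)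
    (hGnn : ∀ t ∈ Set.Ioc 0 R, 0 ≤ G t)
    (hGmono : MonotoneOn G (Set.Ioc 0 R))
    (hquot : ∀ t ∈ Set.Ioc 0 R,
      (u' t * v t - u t * v' t) / (v t) ^ 2 ≤ u t / v t * φ t)
    (hφqu : ∀ t ∈ Set.Ioc 0 R, φ t ^ q * u t ≤ G t) :
    (u R / v R) ^ (1 / q) - (u r / v r) ^ (1 / q)
      ≤ G R ^ (1 / q) / q * ∫ t in r..R, v t ^ (-(1 / q)) :=
  stmt_11_general q r R hq hr hrR u u' v v' φ G hu hupos hv hvpos hφnn hGmono hquot hφqu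
end

section
/- Let q > 1 and C₀ ≥ 0 be real numbers, let R > 0, let u, v : [0,R] → (0,∞) be continuous, and let Λ : (0,R] → [0,∞) be nondecreasing. For t ∈ (0,R] set U(t) = ∫₀^t u and V(t) = ∫₀^t v. Assume that for all 0 < t ≤ s ≤ R: u(s)/v(s) − u(t)/v(t) ≤ C₀·Λ(s)·(1/v(t))·∫_t^s u(τ)^{1−1/q} dτ. Then for all 0 < r ≤ R: (U(R)/V(R))^{1/q} − (U(r)/V(r))^{1/q} ≤ (C₀/q)·Λ(R)·∫₀^R v(t)·(t/V(t))^{(q+1)/q} dt. -/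
/-!
Write `U, V` for the primitives of `u, v` from `0`. Since
`u(t) V(t) - U(t) v(t) = ∫₀ᵗ (u(t) v(τ) - u(τ) v(t)) dτ`, the hypothesis bounds this cross
difference by `t C₀ Λ(t) v(t) ∫₀ᵗ u^{1-1/q}`, and Hölder's inequality turns the last integral into
at most `U(t)^{1-1/q} t^{1/q}`. Up to the positive factor `(1/q) (U/V)^{1/q-1} / V²` this is the
bound `((U/V)^{1/q})' ≤ (C₀/q) Λ(R) v(t) (t/V(t))^{(q+1)/q}`, which integrates from `r` to `R`.
The right-hand side is integrable near `0` because `V(t) ≥ t · min v`.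
-/

open Set MeasureTheory

section Primitive

variable {f : ℝ → ℝ} {a b : ℝ}

lemma hasDerivAt_integral_of_continuousOn (hf : ContinuousOn f (Icc a b)) {t : ℝ}
    (ht : t ∈ Ioo a b) : HasDerivAt (fun x => ∫ τ in a..x, f τ) (f t) t :=
  intervalIntegral.integral_hasDerivAt_right
    ((hf.mono (Icc_subset_Icc_right ht.2.le)).intervalIntegrable_of_Icc ht.1.le)
    ((hf.mono Ioo_subset_Icc_self).stronglyMeasurableAtFilter isOpen_Ioo t ht)
    (hf.continuousAt (Icc_mem_nhds ht.1 ht.2))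

lemma continuousOn_integral_of_continuousOn (hab : a ≤ b) (hf : ContinuousOn f (Icc a b)) :
    ContinuousOn (fun x => ∫ τ in a..x, f τ) (Icc a b) := by
  simpa [uIcc_of_le hab] using intervalIntegral.continuousOn_primitive_interval'
    (hf.intervalIntegrable_of_Icc hab) left_mem_uIcc

lemma integral_pos_of_continuousOn (hf : ContinuousOn f (Icc a b))
    (hpos : ∀ t ∈ Icc a b, 0 < f t) {t : ℝ} (ht : t ∈ Ioc a b) : 0 < ∫ τ in a..t, f τ :=
  intervalIntegral.intervalIntegral_pos_of_pos_on
    ((hf.mono (Icc_subset_Icc_right ht.2)).intervalIntegrable_of_Icc ht.1.le)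
    (fun x hx => hpos x ⟨hx.1.le, hx.2.le.trans ht.2⟩) ht.1

end Primitive

lemma mul_integral_sub_integral_mul_le {a t K : ℝ} {u v w : ℝ → ℝ} (hat : a ≤ t) (hK : 0 ≤ K)
    (hu : ContinuousOn u (Icc a t)) (hv : ContinuousOn v (Icc a t))
    (hvpos : ∀ τ ∈ Ioc a t, 0 < v τ) (hw : IntervalIntegrable w volume a t)
    (hw₀ : ∀ τ ∈ Ioc a t, 0 ≤ w τ)
    (h : ∀ τ ∈ Ioo a t, u t / v t - u τ / v τ ≤ K * (1 / v τ) * ∫ σ in τ..t, w σ) :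
    u t * (∫ τ in a..t, v τ) - (∫ τ in a..t, u τ) * v t
      ≤ (t - a) * (K * v t * ∫ τ in a..t, w τ) := by
  rcases hat.eq_or_lt with rfl | hat
  · simp
  have hvt : 0 < v t := hvpos t ⟨hat, le_rfl⟩
  have hpointwise : ∀ τ ∈ Ioo a t,
      u t * v τ - u τ * v t ≤ K * v t * ∫ σ in a..t, w σ := fun τ hτ => by
    have hvτ : 0 < v τ := hvpos τ (Ioo_subset_Ioc_self hτ)
    have htail : ∫ σ in τ..t, w σ ≤ ∫ σ in a..t, w σ :=
      intervalIntegral.integral_mono_interval hτ.1.le hτ.2.le le_rfl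
        (ae_restrict_of_forall_mem measurableSet_Ioc hw₀) hw
    calc u t * v τ - u τ * v t = (u t / v t - u τ / v τ) * (v τ * v t) := by field_simp
      _ ≤ K * (1 / v τ) * (∫ σ in τ..t, w σ) * (v τ * v t) := by gcongr; exact h τ hτ
      _ = K * v t * ∫ σ in τ..t, w σ := by field_simp
      _ ≤ K * v t * ∫ σ in a..t, w σ := by gcongr
  have hu' : IntervalIntegrable u volume a t := hu.intervalIntegrable_of_Icc hat.le
  have hv' : IntervalIntegrable v volume a t := hv.intervalIntegrable_of_Icc hat.le
  calc u t * (∫ τ in a..t, v τ) - (∫ τ in a..t, u τ) * v t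
      = ∫ τ in a..t, (u t * v τ - u τ * v t) := by
        rw [intervalIntegral.integral_sub (hv'.const_mul _) (hu'.mul_const _),
          intervalIntegral.integral_const_mul, intervalIntegral.integral_mul_const]
    _ ≤ ∫ _ in a..t, K * v t * ∫ σ in a..t, w σ :=
        intervalIntegral.integral_mono_on_of_le_Ioo hat.le ((hv'.const_mul _).sub (hu'.mul_const _))
          intervalIntegrable_const hpointwise
    _ = (t - a) * (K * v t * ∫ τ in a..t, w τ) := by
        rw [intervalIntegral.integral_const, smul_eq_mul]

lemma integral_rpow_le_rpow_integral_mul {θ a b : ℝ} {f : ℝ → ℝ} (hθ₀ : 0 < θ) (hθ₁ : θ < 1)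
    (hab : a ≤ b) (hf : ContinuousOn f (Icc a b)) (hf₀ : ∀ t ∈ Icc a b, 0 ≤ f t) :
    ∫ t in a..b, f t ^ θ ≤ (∫ t in a..b, f t) ^ θ * (b - a) ^ (1 - θ) := by
  have hpq : (1 / θ).HolderConjugate (1 / (1 - θ)) :=
    Real.holderConjugate_one_div hθ₀ (sub_pos.2 hθ₁) (by ring)
  have hfθ : ContinuousOn (fun t => f t ^ θ) (Icc a b) := hf.rpow_const fun _ _ => Or.inr hθ₀.le
  obtain ⟨C, hC⟩ := isCompact_Icc.exists_bound_of_continuousOn hfθ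
  have hmem : MemLp (fun t => f t ^ θ) (ENNReal.ofReal (1 / θ)) (volume.restrict (Ioc a b)) :=
    .of_bound ((hfθ.mono Ioc_subset_Icc_self).aestronglyMeasurable measurableSet_Ioc) C <|
      ae_restrict_of_forall_mem measurableSet_Ioc fun t ht => hC t (Ioc_subset_Icc_self ht)
  have h := integral_mul_le_Lp_mul_Lq_of_nonneg hpq
    (ae_restrict_of_forall_mem measurableSet_Ioc fun t ht =>
      Real.rpow_nonneg (hf₀ t (Ioc_subset_Icc_self ht)) θ)
    (Filter.Eventually.of_forall fun _ => zero_le_one) hmem (memLp_const 1)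
  have hpow : ∀ t ∈ Ioc a b, (f t ^ θ) ^ (1 / θ) = f t := fun t ht => by
    rw [← Real.rpow_mul (hf₀ t (Ioc_subset_Icc_self ht)), mul_one_div_cancel hθ₀.ne', Real.rpow_one]
  rw [setIntegral_congr_fun measurableSet_Ioc hpow] at h
  simpa [intervalIntegral.integral_of_le hab, hab] using h

lemma mul_integral_sub_integral_mul_le_rpow {q t K : ℝ} {u v : ℝ → ℝ} (hq : 1 < q) (ht : 0 < t)
    (hK : 0 ≤ K) (hu : ContinuousOn u (Icc 0 t)) (hu₀ : ∀ τ ∈ Icc 0 t, 0 ≤ u τ)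
    (hv : ContinuousOn v (Icc 0 t)) (hvpos : ∀ τ ∈ Ioc 0 t, 0 < v τ)
    (h : ∀ τ ∈ Ioo 0 t,
      u t / v t - u τ / v τ ≤ K * (1 / v τ) * ∫ σ in τ..t, u σ ^ (1 - 1 / q)) :
    u t * (∫ τ in 0..t, v τ) - (∫ τ in 0..t, u τ) * v t
      ≤ K * v t * (t ^ ((q + 1) / q) * (∫ τ in 0..t, u τ) ^ (1 - 1 / q)) := by
  have hq₀ : 0 < q := one_pos.trans hq
  have hθ₀ : 0 < 1 - 1 / q := sub_pos.2 ((div_lt_one hq₀).2 hq)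
  have hθ₁ : 1 - 1 / q < 1 := sub_lt_self 1 (one_div_pos.2 hq₀)
  have hvt : 0 < v t := hvpos t ⟨ht, le_rfl⟩
  have huθ : ContinuousOn (fun σ => u σ ^ (1 - 1 / q)) (Icc 0 t) :=
    hu.rpow_const fun _ _ => Or.inr hθ₀.le
  have hholder := integral_rpow_le_rpow_integral_mul hθ₀ hθ₁ ht.le hu hu₀
  rw [sub_zero, sub_sub_cancel] at hholder
  calc u t * (∫ τ in 0..t, v τ) - (∫ τ in 0..t, u τ) * v t
      ≤ (t - 0) * (K * v t * ∫ σ in 0..t, u σ ^ (1 - 1 / q)) :=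
        mul_integral_sub_integral_mul_le ht.le hK hu hv hvpos (huθ.intervalIntegrable_of_Icc ht.le)
          (fun τ hτ => Real.rpow_nonneg (hu₀ τ (Ioc_subset_Icc_self hτ)) _) h
    _ ≤ t * (K * v t * ((∫ τ in 0..t, u τ) ^ (1 - 1 / q) * t ^ (1 / q))) := by
        rw [sub_zero]; gcongr
    _ = K * v t * (t ^ ((q + 1) / q) * (∫ τ in 0..t, u τ) ^ (1 - 1 / q)) := by
        rw [add_div, div_self hq₀.ne', Real.rpow_add ht, Real.rpow_one]; ring

lemma div_sq_mul_rpow_le {q t U V u v K : ℝ} (hq : 0 < q) (ht : 0 ≤ t) (hU : 0 < U)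
    (hV : 0 < V) (h : u * V - U * v ≤ K * v * (t ^ ((q + 1) / q) * U ^ (1 - 1 / q))) :
    (u * V - U * v) / V ^ 2 * (1 / q) * (U / V) ^ (1 / q - 1)
      ≤ K / q * (v * (t / V) ^ ((q + 1) / q)) := by
  have hU_cancel : U ^ (1 - 1 / q) * U ^ (1 / q - 1) = 1 := by
    rw [← Real.rpow_add hU, show 1 - 1 / q + (1 / q - 1) = 0 by ring, Real.rpow_zero]
  have hV_exp : V ^ ((q + 1) / q) = V ^ 2 * V ^ (1 / q - 1) := by
    rw [← Real.rpow_two, ← Real.rpow_add hV]; congr 1; field_simp; ring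
  calc (u * V - U * v) / V ^ 2 * (1 / q) * (U / V) ^ (1 / q - 1)
      ≤ K * v * (t ^ ((q + 1) / q) * U ^ (1 - 1 / q)) / V ^ 2 * (1 / q)
          * (U / V) ^ (1 / q - 1) := by
        gcongr
    _ = K * v * t ^ ((q + 1) / q) * (U ^ (1 - 1 / q) * U ^ (1 / q - 1))
          / (V ^ 2 * V ^ (1 / q - 1)) / q := by
        rw [Real.div_rpow hU.le hV.le]; ring
    _ = K / q * (v * (t / V) ^ ((q + 1) / q)) := by
        rw [hU_cancel, Real.div_rpow ht hV.le, hV_exp]; ring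

lemma rpow_div_sub_rpow_div_le_integral {q K r R : ℝ} {U V u v : ℝ → ℝ} (hq : 0 < q)
    (hr : 0 ≤ r) (hrR : r ≤ R) (hUc : ContinuousOn U (Icc r R)) (hVc : ContinuousOn V (Icc r R))
    (hU : ∀ t ∈ Ioo r R, HasDerivAt U (u t) t) (hV : ∀ t ∈ Ioo r R, HasDerivAt V (v t) t)
    (hUpos : ∀ t ∈ Icc r R, 0 < U t) (hVpos : ∀ t ∈ Icc r R, 0 < V t)
    (hv : ContinuousOn v (Icc r R))
    (h : ∀ t ∈ Ioo r R,
      u t * V t - U t * v t ≤ K * v t * (t ^ ((q + 1) / q) * U t ^ (1 - 1 / q))) :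
    (U R / V R) ^ (1 / q) - (U r / V r) ^ (1 / q)
      ≤ K / q * ∫ t in r..R, v t * (t / V t) ^ ((q + 1) / q) := by
  rw [← intervalIntegral.integral_const_mul]
  refine intervalIntegral.sub_le_integral_of_hasDeriv_right_of_le hrR
    ((hUc.div hVc fun t ht => (hVpos t ht).ne').rpow_const fun t ht =>
      Or.inl (div_pos (hUpos t ht) (hVpos t ht)).ne')
    (fun t ht => ?_) ?_ (fun t ht => div_sq_mul_rpow_le hq (hr.trans ht.1.le)
      (hUpos t (Ioo_subset_Icc_self ht)) (hVpos t (Ioo_subset_Icc_self ht)) (h t ht))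
  · exact (((hU t ht).div (hV t ht) (hVpos t (Ioo_subset_Icc_self ht)).ne').rpow_const
      (Or.inl (div_pos (hUpos t (Ioo_subset_Icc_self ht))
        (hVpos t (Ioo_subset_Icc_self ht))).ne')).hasDerivWithinAt
  · exact (continuousOn_const.mul (hv.mul ((continuousOn_id.div hVc fun t ht =>
      (hVpos t ht).ne').rpow_const fun _ _ => Or.inr (by positivity)))).integrableOn_Icc

lemma intervalIntegrable_mul_div_integral_rpow {v : ℝ → ℝ} {R s : ℝ} (hR : 0 ≤ R) (hs : 0 ≤ s)
    (hv : ContinuousOn v (Icc 0 R)) (hvpos : ∀ t ∈ Icc 0 R, 0 < v t) :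
    IntervalIntegrable (fun t => v t * (t / ∫ τ in 0..t, v τ) ^ s) volume 0 R := by
  obtain ⟨m, hm, hmin⟩ := isCompact_Icc.exists_isMinOn (nonempty_Icc.2 hR) hv
  obtain ⟨M, hM⟩ := isCompact_Icc.exists_bound_of_continuousOn hv
  have hVpos : ∀ t ∈ Ioc 0 R, 0 < ∫ τ in 0..t, v τ := fun t ht =>
    integral_pos_of_continuousOn hv hvpos ht
  have hVge : ∀ t ∈ Ioc 0 R, t * v m ≤ ∫ τ in 0..t, v τ := fun t ht => by
    simpa using intervalIntegral.integral_mono_on ht.1.le (intervalIntegrable_const (μ := volume))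
      ((hv.mono (Icc_subset_Icc_right ht.2)).intervalIntegrable_of_Icc ht.1.le)
      fun τ hτ => hmin ⟨hτ.1, hτ.2.trans ht.2⟩
  have hcont : ContinuousOn (fun t => v t * (t / ∫ τ in 0..t, v τ) ^ s) (Ioc 0 R) :=
    (hv.mono Ioc_subset_Icc_self).mul <|
      (continuousOn_id.div ((continuousOn_integral_of_continuousOn hR hv).mono
        Ioc_subset_Icc_self) fun t ht => (hVpos t ht).ne').rpow_const fun _ _ => Or.inr hs
  rw [intervalIntegrable_iff_integrableOn_Ioc_of_le hR]
  refine IntegrableOn.of_bound measure_Ioc_lt_top (hcont.aestronglyMeasurable measurableSet_Ioc)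
    (M * (1 / v m) ^ s) (ae_restrict_of_forall_mem measurableSet_Ioc fun t ht => ?_)
  have hnonneg : 0 ≤ t / ∫ τ in 0..t, v τ := div_nonneg ht.1.le (hVpos t ht).le
  have hratio : t / ∫ τ in 0..t, v τ ≤ 1 / v m := by
    rw [div_le_div_iff₀ (hVpos t ht) (hvpos m hm), one_mul]
    exact hVge t ht
  have hvt := hM t (Ioc_subset_Icc_self ht)
  rw [norm_mul, Real.norm_of_nonneg (Real.rpow_nonneg hnonneg s)]
  exact mul_le_mul hvt (Real.rpow_le_rpow hnonneg hratio hs) (Real.rpow_nonneg hnonneg s)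
    ((norm_nonneg _).trans hvt)

lemma rpow_div_integral_sub_le {q K r R : ℝ} {u v : ℝ → ℝ} (hq : 0 < q) (hK : 0 ≤ K)
    (hr : 0 < r) (hrR : r ≤ R) (hu : ContinuousOn u (Icc 0 R)) (hupos : ∀ t ∈ Icc 0 R, 0 < u t)
    (hv : ContinuousOn v (Icc 0 R)) (hvpos : ∀ t ∈ Icc 0 R, 0 < v t)
    (h : ∀ t ∈ Ioo r R, u t * (∫ τ in 0..t, v τ) - (∫ τ in 0..t, u τ) * v t
      ≤ K * v t * (t ^ ((q + 1) / q) * (∫ τ in 0..t, u τ) ^ (1 - 1 / q))) :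
    ((∫ τ in 0..R, u τ) / ∫ τ in 0..R, v τ) ^ (1 / q)
        - ((∫ τ in 0..r, u τ) / ∫ τ in 0..r, v τ) ^ (1 / q)
      ≤ K / q * ∫ t in 0..R, v t * (t / ∫ τ in 0..t, v τ) ^ ((q + 1) / q) := by
  have hR : 0 ≤ R := hr.le.trans hrR
  have hg₀ : ∀ t ∈ Ioc 0 R, 0 ≤ v t * (t / ∫ τ in 0..t, v τ) ^ ((q + 1) / q) := fun t ht =>
    mul_nonneg (hvpos t (Ioc_subset_Icc_self ht)).le (Real.rpow_nonneg
      (div_nonneg ht.1.le (integral_pos_of_continuousOn hv hvpos ht).le) _)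
  calc _ ≤ K / q * ∫ t in r..R, v t * (t / ∫ τ in 0..t, v τ) ^ ((q + 1) / q) :=
        rpow_div_sub_rpow_div_le_integral hq hr.le hrR
          ((continuousOn_integral_of_continuousOn hR hu).mono (Icc_subset_Icc_left hr.le))
          ((continuousOn_integral_of_continuousOn hR hv).mono (Icc_subset_Icc_left hr.le))
          (fun t ht => hasDerivAt_integral_of_continuousOn hu ⟨hr.trans ht.1, ht.2⟩)
          (fun t ht => hasDerivAt_integral_of_continuousOn hv ⟨hr.trans ht.1, ht.2⟩)
          (fun t ht => integral_pos_of_continuousOn hu hupos ⟨hr.trans_le ht.1, ht.2⟩)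
          (fun t ht => integral_pos_of_continuousOn hv hvpos ⟨hr.trans_le ht.1, ht.2⟩)
          (hv.mono (Icc_subset_Icc_left hr.le)) h
    _ ≤ K / q * ∫ t in 0..R, v t * (t / ∫ τ in 0..t, v τ) ^ ((q + 1) / q) := by
        gcongr
        exact intervalIntegral.integral_mono_interval hr.le hrR le_rfl
          (ae_restrict_of_forall_mem measurableSet_Ioc hg₀)
          (intervalIntegrable_mul_div_integral_rpow hR (by positivity) hv hvpos)

theorem stmt_13_general (q C₀ R : ℝ) (hq : 1 < q) (hC₀ : 0 ≤ C₀)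
    (u v Λ : ℝ → ℝ)
    (hu : ContinuousOn u (Set.Icc 0 R))
    (hupos : ∀ t ∈ Set.Icc 0 R, 0 < u t)
    (hv : ContinuousOn v (Set.Icc 0 R))
    (hvpos : ∀ t ∈ Set.Icc 0 R, 0 < v t)
    (hΛnn : ∀ t ∈ Set.Ioc 0 R, 0 ≤ Λ t)
    (hΛmono : MonotoneOn Λ (Set.Ioc 0 R))
    (hratio : ∀ t s : ℝ, 0 < t → t ≤ s → s ≤ R →
      u s / v s - u t / v t
        ≤ C₀ * Λ s * (1 / v t) * ∫ τ in t..s, u τ ^ (1 - 1 / q)) :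
    ∀ r : ℝ, 0 < r → r ≤ R →
      ((∫ τ in (0:ℝ)..R, u τ) / ∫ τ in (0:ℝ)..R, v τ) ^ (1 / q)
          - ((∫ τ in (0:ℝ)..r, u τ) / ∫ τ in (0:ℝ)..r, v τ) ^ (1 / q)
        ≤ C₀ / q * Λ R
          * ∫ t in (0:ℝ)..R, v t * (t / ∫ τ in (0:ℝ)..t, v τ) ^ ((q + 1) / q) := by
  intro r hr hrR
  have hΛR : 0 ≤ Λ R := hΛnn R ⟨hr.trans_le hrR, le_rfl⟩
  refine (rpow_div_integral_sub_le (one_pos.trans hq) (mul_nonneg hC₀ hΛR) hr hrR hu hupos hv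
    hvpos fun t ht => ?_).trans_eq (by ring)
  have ht₀ : 0 < t := hr.trans ht.1
  refine mul_integral_sub_integral_mul_le_rpow hq ht₀ (mul_nonneg hC₀ hΛR)
    (hu.mono (Icc_subset_Icc_right ht.2.le)) (fun τ hτ => (hupos τ ⟨hτ.1, hτ.2.trans ht.2.le⟩).le)
    (hv.mono (Icc_subset_Icc_right ht.2.le)) (fun τ hτ => hvpos τ ⟨hτ.1.le, hτ.2.trans ht.2.le⟩)
    fun τ hτ => (hratio τ t hτ.1 hτ.2.le ht.2.le).trans ?_
  have hvτ : 0 < v τ := hvpos τ ⟨hτ.1.le, hτ.2.le.trans ht.2.le⟩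
  have hΛ : Λ t ≤ Λ R := hΛmono ⟨ht₀, ht.2.le⟩ ⟨hr.trans_le hrR, le_rfl⟩ ht.2.le
  have hint : 0 ≤ ∫ σ in τ..t, u σ ^ (1 - 1 / q) := intervalIntegral.integral_nonneg hτ.2.le
    fun σ hσ => Real.rpow_nonneg (hupos σ ⟨hτ.1.le.trans hσ.1, hσ.2.trans ht.2.le⟩).le _
  gcongr

/-- Analytic core of Theorem 1.3 (relative volume comparison estimate): if the
area ratios satisfy `u(s)/v(s) − u(t)/v(t) ≤ C₀·Λ(s)·(1/v(t))·∫_t^s u^{1−1/q}`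
for `0 < t ≤ s ≤ R`, then with `U = ∫₀^· u`, `V = ∫₀^· v`,
`(U(R)/V(R))^{1/q} − (U(r)/V(r))^{1/q} ≤ (C₀/q)·Λ(R)·∫₀^R v(t)·(t/V(t))^{(q+1)/q} dt`. -/
theorem stmt_13 (q C₀ R : ℝ) (hq : 1 < q) (hC₀ : 0 ≤ C₀) (hR : 0 < R)
    (u v Λ : ℝ → ℝ)
    (hu : ContinuousOn u (Set.Icc 0 R))
    (hupos : ∀ t ∈ Set.Icc 0 R, 0 < u t)
    (hv : ContinuousOn v (Set.Icc 0 R))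
    (hvpos : ∀ t ∈ Set.Icc 0 R, 0 < v t)
    (hΛnn : ∀ t ∈ Set.Ioc 0 R, 0 ≤ Λ t)
    (hΛmono : MonotoneOn Λ (Set.Ioc 0 R))
    (hratio : ∀ t s : ℝ, 0 < t → t ≤ s → s ≤ R →
      u s / v s - u t / v t
        ≤ C₀ * Λ s * (1 / v t) * ∫ τ in t..s, u τ ^ (1 - 1 / q)) :
    ∀ r : ℝ, 0 < r → r ≤ R →
      ((∫ τ in (0:ℝ)..R, u τ) / ∫ τ in (0:ℝ)..R, v τ) ^ (1 / q)
          - ((∫ τ in (0:ℝ)..r, u τ) / ∫ τ in (0:ℝ)..r, v τ) ^ (1 / q)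
        ≤ C₀ / q * Λ R
          * ∫ t in (0:ℝ)..R, v t * (t / ∫ τ in (0:ℝ)..t, v τ) ^ ((q + 1) / q) :=
  stmt_13_general q C₀ R hq hC₀ u v Λ hu hupos hv hvpos hΛnn hΛmono hratio
end
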